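/- Let μ be a positive Radon measure and let 𝒞 be a finite convex family of dyadic cubes (if J ⊆ K ⊆ I with I, J ∈ 𝒞 and K dyadic, then K ∈ 𝒞) that is closed under siblings (if I ∈ 𝒞 then all children of Î are in 𝒞), with a unique maximal cube Q and with minimal cubes forming a partition family ℳ. Then for any locally integrable g, Σ_{J ∈ 𝒞∖{Q}} ⟨g, h_J⟩ h_J = Σ_{M ∈ ℳ} ⟨g⟩_M 𝟙_M − ⟨g⟩_Q 𝟙_Q, μ-almost everywhere, where the sum is over all non-maximal cubes of the family. -/

import Mathlib

/-!
Off the `μ`-null cubes, `⟨g, h_J⟩ h_J = (⟨g⟩_J - ⟨g⟩_Ĵ) (𝟙_J - μ(J)/μ(Ĵ) 𝟙_Ĵ)`. If the children of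
`R` partition `R`, their `μ`-weighted averages add up to `μ(R) ⟨g⟩_R`, so the sum of these terms
over the children of `R` is the one-scale identity `∑_{J ∈ ch(R)} E_J g - E_R g`.

In the family, the parent of every cube other than `Q` is a non-minimal cube of the family, and
every non-minimal cube has all of its children in the family. Summing the one-scale identity over
the non-minimal cubes therefore telescopes: each cube other than `Q` occurs once as a child, each
non-minimal cube once as a parent, which leaves the minimal cubes minus `Q`.
-/

open MeasureTheory Set
open scoped ENNReal

noncomputable section

/-- Half-open dyadic cube `∏ᵢ 2^{-k}[jᵢ, jᵢ+1)` of side length `2^(-k)`. -/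
def dyadicCube (n : ℕ) (k : ℤ) (j : Fin n → ℤ) : Set (Fin n → ℝ) :=
  {x | ∀ i, (j i : ℝ) * (2:ℝ) ^ (-k) ≤ x i ∧ x i < ((j i : ℝ) + 1) * (2:ℝ) ^ (-k)}

/-- The dyadic parent of the cube with parameters `p = (k, j)`. -/
def parentCube (n : ℕ) (p : ℤ × (Fin n → ℤ)) : Set (Fin n → ℝ) :=
  dyadicCube n (p.1 - 1) (fun i => Int.fdiv (p.2 i) 2)

/-- The `μ`-average of `f` over `A` (zero when `μ(A) = 0`). -/
def avgOn {X : Type*} [MeasurableSpace X] (μ : Measure X) (f : X → ℝ) (A : Set X) : ℝ :=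
  if μ A = 0 then 0 else (μ A).toReal⁻¹ * ∫ x in A, f x ∂μ

/-- The Haar function adapted to `I` with parent `Ih` (zero when `μ(I) = 0`). -/
def haarFn {X : Type*} [MeasurableSpace X] (μ : Measure X) (I Ih : Set X) : X → ℝ :=
  fun x => if μ I = 0 then 0 else
    Real.sqrt (μ I).toReal * ((μ I).toReal⁻¹ * Set.indicator I (fun _ => (1:ℝ)) x -
      (μ Ih).toReal⁻¹ * Set.indicator Ih (fun _ => (1:ℝ)) x)

section Haar

variable {X : Type*} [MeasurableSpace X] {μ : Measure X} {g : X → ℝ}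

lemma measureReal_mul_avgOn {A : Set X} (hA : μ A ≠ ∞) :
    μ.real A * avgOn μ g A = ∫ x in A, g x ∂μ := by
  by_cases h0 : μ A = 0
  · simp [avgOn, h0, Measure.restrict_eq_zero.2 h0]
  · rw [avgOn, if_neg h0, measureReal_def, ← mul_assoc,
      mul_inv_cancel₀ (ENNReal.toReal_pos h0 hA).ne', one_mul]

lemma integral_mul_haarFn {J K : Set X} (hJK : J ⊆ K) (hJ : MeasurableSet J)
    (hK : MeasurableSet K) (hKfin : μ K ≠ ∞) (hg : IntegrableOn g K μ) (hJ0 : μ J ≠ 0) :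
    ∫ y, g y * haarFn μ J K y ∂μ = √(μ.real J) * (avgOn μ g J - avgOn μ g K) := by
  have hJfin : μ J ≠ ∞ := ne_top_of_le_ne_top hKfin (measure_mono hJK)
  have hK0 : μ K ≠ 0 := fun h => hJ0 (measure_mono_null hJK h)
  have hm : μ.real J ≠ 0 := (ENNReal.toReal_pos hJ0 hJfin).ne'
  have hT : μ.real K ≠ 0 := (ENNReal.toReal_pos hK0 hKfin).ne'
  have hfun : (fun y => g y * haarFn μ J K y) = fun y =>
      √(μ.real J) * (μ.real J)⁻¹ * J.indicator g y
        - √(μ.real J) * (μ.real K)⁻¹ * K.indicator g y := by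
    funext y
    by_cases hyJ : y ∈ J <;> by_cases hyK : y ∈ K <;>
      simp [haarFn, hJ0, hyJ, hyK, measureReal_def] <;> ring
  have hgJ : Integrable (J.indicator g) μ := (integrable_indicator_iff hJ).2 (hg.mono_set hJK)
  have hgK : Integrable (K.indicator g) μ := (integrable_indicator_iff hK).2 hg
  rw [hfun, integral_sub (hgJ.const_mul _) (hgK.const_mul _), integral_const_mul,
    integral_const_mul, integral_indicator hJ, integral_indicator hK,
    ← measureReal_mul_avgOn hJfin, ← measureReal_mul_avgOn hKfin]
  field_simp

lemma integral_mul_haarFn_mul_haarFn {J K : Set X} (hJK : J ⊆ K) (hJ : MeasurableSet J)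
    (hK : MeasurableSet K) (hKfin : μ K ≠ ∞) (hg : IntegrableOn g K μ) {x : X}
    (hx : μ J = 0 → x ∉ J) :
    (∫ y, g y * haarFn μ J K y ∂μ) * haarFn μ J K x =
      (avgOn μ g J - avgOn μ g K) * (J.indicator (fun _ => (1:ℝ)) x
        - μ.real J / μ.real K * K.indicator (fun _ => (1:ℝ)) x) := by
  by_cases hJ0 : μ J = 0
  · simp [haarFn, hJ0, hx hJ0, measureReal_def]
  have hJfin : μ J ≠ ∞ := ne_top_of_le_ne_top hKfin (measure_mono hJK)
  have hm : 0 < μ.real J := ENNReal.toReal_pos hJ0 hJfin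
  rw [integral_mul_haarFn hJK hJ hK hKfin hg hJ0]
  simp only [haarFn, if_neg hJ0, ← measureReal_def]
  calc _ = (√(μ.real J) * √(μ.real J)) * (avgOn μ g J - avgOn μ g K) *
        ((μ.real J)⁻¹ * J.indicator (fun _ => (1:ℝ)) x
          - (μ.real K)⁻¹ * K.indicator (fun _ => (1:ℝ)) x) := by ring
    _ = _ := by rw [Real.mul_self_sqrt hm.le]; field_simp

lemma sum_integral_mul_haarFn_mul_haarFn {ι : Type*} {s : Finset ι} {J : ι → Set X}
    {K : Set X} (hJ : ∀ i ∈ s, MeasurableSet (J i)) (hdisj : (s : Set ι).PairwiseDisjoint J)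
    (hunion : ⋃ i ∈ s, J i = K) (hKfin : μ K ≠ ∞) (hg : IntegrableOn g K μ) {x : X}
    (hx : ∀ i ∈ s, μ (J i) = 0 → x ∉ J i) :
    ∑ i ∈ s, (∫ y, g y * haarFn μ (J i) K y ∂μ) * haarFn μ (J i) K x =
      ∑ i ∈ s, avgOn μ g (J i) * (J i).indicator (fun _ => (1:ℝ)) x
        - avgOn μ g K * K.indicator (fun _ => (1:ℝ)) x := by
  have hJK : ∀ i ∈ s, J i ⊆ K := fun i hi => hunion ▸ subset_biUnion_of_mem (u := J) hi
  have hK : MeasurableSet K := hunion ▸ Finset.measurableSet_biUnion s hJ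
  have hJfin : ∀ i ∈ s, μ (J i) ≠ ∞ := fun i hi =>
    ne_top_of_le_ne_top hKfin (measure_mono (hJK i hi))
  have hind : ∑ i ∈ s, (J i).indicator (fun _ => (1:ℝ)) x = K.indicator (fun _ => 1) x := by
    rw [← hunion, Finset.indicator_biUnion_apply s J hdisj]
  have hmeas : ∑ i ∈ s, μ.real (J i) = μ.real K := by
    rw [← hunion, measureReal_biUnion_finset hdisj hJ hJfin]
  have hint : ∑ i ∈ s, μ.real (J i) * avgOn μ g (J i) = μ.real K * avgOn μ g K := by
    rw [Finset.sum_congr rfl fun i hi => measureReal_mul_avgOn (hJfin i hi),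
      measureReal_mul_avgOn hKfin, ← hunion,
      integral_biUnion_finset s hJ hdisj fun i hi => hg.mono_set (hJK i hi)]
  rw [Finset.sum_congr rfl fun i hi =>
    integral_mul_haarFn_mul_haarFn (hJK i hi) (hJ i hi) hK hKfin hg (hx i hi)]
  set a := avgOn μ g K
  set e := K.indicator (fun _ => (1:ℝ)) x
  calc ∑ i ∈ s, (avgOn μ g (J i) - a) *
          ((J i).indicator (fun _ => (1:ℝ)) x - μ.real (J i) / μ.real K * e)
      = ∑ i ∈ s, avgOn μ g (J i) * (J i).indicator (fun _ => (1:ℝ)) x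
          - a * ∑ i ∈ s, (J i).indicator (fun _ => (1:ℝ)) x
          - e / μ.real K * (∑ i ∈ s, μ.real (J i) * avgOn μ g (J i)
            - a * ∑ i ∈ s, μ.real (J i)) := by
        simp only [Finset.mul_sum, ← Finset.sum_sub_distrib]
        exact Finset.sum_congr rfl fun i _ => by ring
    _ = _ := by rw [hind, hint, hmeas]; ring

theorem ae_sum_integral_mul_haarFn_mul_haarFn_eq {ι : Type*} [DecidableEq ι]
    {C M : Finset ι} {Q : ι} (hQ : Q ∈ C) (hMC : M ⊆ C) {cube : ι → Set X} {parent : ι → ι}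
    (hparent : ∀ p ∈ C.erase Q, parent p ∈ C \ M)
    (hdisj : ∀ R ∈ C \ M,
      ((C.erase Q).filter (parent · = R) : Set ι).PairwiseDisjoint cube)
    (hunion : ∀ R ∈ C \ M, ⋃ p ∈ (C.erase Q).filter (parent · = R), cube p = cube R)
    (hmeas : ∀ p ∈ C, MeasurableSet (cube p)) (hsub : ∀ p ∈ C, cube p ⊆ cube Q)
    (hfin : μ (cube Q) ≠ ∞) (hg : IntegrableOn g (cube Q) μ) :
    ∀ᵐ x ∂μ, ∑ p ∈ C.erase Q, (∫ y, g y * haarFn μ (cube p) (cube (parent p)) y ∂μ) *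
        haarFn μ (cube p) (cube (parent p)) x =
      ∑ p ∈ M, avgOn μ g (cube p) * (cube p).indicator (fun _ => (1:ℝ)) x
        - avgOn μ g (cube Q) * (cube Q).indicator (fun _ => (1:ℝ)) x := by
  have hnull : ∀ᵐ x ∂μ, ∀ p ∈ C, μ (cube p) = 0 → x ∉ cube p := by
    refine (Filter.eventually_all_finset C).2 fun p _ => ?_
    by_cases h0 : μ (cube p) = 0
    · filter_upwards [measure_eq_zero_iff_ae_notMem.1 h0] with x hx _ using hx
    · exact .of_forall fun _ h => absurd h h0
  filter_upwards [hnull] with x hx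
  set E : ι → ℝ := fun p => avgOn μ g (cube p) * (cube p).indicator (fun _ => (1:ℝ)) x
  have hfiber : ∀ R ∈ C \ M,
      ∑ p ∈ (C.erase Q).filter (parent · = R),
        (∫ y, g y * haarFn μ (cube p) (cube (parent p)) y ∂μ) *
          haarFn μ (cube p) (cube (parent p)) x =
      ∑ p ∈ (C.erase Q).filter (parent · = R), E p - E R := by
    intro R hR
    have hRC : R ∈ C := (Finset.mem_sdiff.1 hR).1
    have hmemC : ∀ p ∈ (C.erase Q).filter (parent · = R), p ∈ C := fun p hp =>
      Finset.mem_of_mem_erase (Finset.mem_filter.1 hp).1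
    rw [Finset.sum_congr rfl fun p hp => by rw [(Finset.mem_filter.1 hp).2]]
    exact sum_integral_mul_haarFn_mul_haarFn (fun p hp => hmeas p (hmemC p hp)) (hdisj R hR)
      (hunion R hR) (ne_top_of_le_ne_top hfin (measure_mono (hsub R hRC)))
      (hg.mono_set (hsub R hRC)) fun p hp => hx p (hmemC p hp)
  rw [← Finset.sum_fiberwise_of_maps_to hparent, Finset.sum_congr rfl hfiber,
    Finset.sum_sub_distrib, Finset.sum_fiberwise_of_maps_to hparent]
  have hQsplit := Finset.sum_erase_add C E hQ
  have hMsplit := Finset.sum_sdiff hMC (f := E)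
  linarith

end Haar

section Dyadic

variable {n : ℕ}

lemma mem_dyadicCube_iff {k : ℤ} {j : Fin n → ℤ} {x : Fin n → ℝ} :
    x ∈ dyadicCube n k j ↔ ∀ i, ⌊x i * 2 ^ k⌋ = j i := by
  have h2 : (0:ℝ) < 2 ^ k := zpow_pos two_pos k
  refine forall_congr' fun i => ?_
  rw [Int.floor_eq_iff, zpow_neg, ← div_eq_mul_inv, ← div_eq_mul_inv,
    div_le_iff₀ h2, lt_div_iff₀ h2]

lemma measurableSet_dyadicCube (k : ℤ) (j : Fin n → ℤ) : MeasurableSet (dyadicCube n k j) := by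
  have : dyadicCube n k j = ⋂ i, (fun x : Fin n → ℝ => x i) ⁻¹'
      Ico ((j i : ℝ) * 2 ^ (-k)) ((j i + 1) * 2 ^ (-k)) := by
    ext x; simp [dyadicCube]
  rw [this]
  exact .iInter fun i => measurableSet_Ico.preimage (measurable_pi_apply i)

def dyadicIndex (k : ℤ) (x : Fin n → ℝ) : ℤ × (Fin n → ℤ) := (k, fun i => ⌊x i * 2 ^ k⌋)

def parentIndex (p : ℤ × (Fin n → ℤ)) : ℤ × (Fin n → ℤ) := (p.1 - 1, fun i => (p.2 i).fdiv 2)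

lemma parentCube_eq (p : ℤ × (Fin n → ℤ)) :
    parentCube n p = dyadicCube n (parentIndex p).1 (parentIndex p).2 := rfl

lemma mem_dyadicCube_dyadicIndex (k : ℤ) (x : Fin n → ℝ) :
    x ∈ dyadicCube n (dyadicIndex k x).1 (dyadicIndex k x).2 :=
  mem_dyadicCube_iff.2 fun _ => rfl

lemma dyadicIndex_eq_of_mem {p : ℤ × (Fin n → ℤ)} {x : Fin n → ℝ}
    (hx : x ∈ dyadicCube n p.1 p.2) : dyadicIndex p.1 x = p :=
  Prod.ext rfl (funext (mem_dyadicCube_iff.1 hx))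

lemma dyadicCube_nonempty (p : ℤ × (Fin n → ℤ)) : (dyadicCube n p.1 p.2).Nonempty :=
  ⟨fun i => p.2 i * 2 ^ (-p.1), mem_dyadicCube_iff.2 fun i => by
    rw [mul_assoc, ← zpow_add₀ two_ne_zero, neg_add_cancel, zpow_zero, mul_one, Int.floor_intCast]⟩

lemma parentIndex_dyadicIndex (k : ℤ) (x : Fin n → ℝ) :
    parentIndex (dyadicIndex k x) = dyadicIndex (k - 1) x := by
  refine Prod.ext rfl (funext fun i => ?_)
  have h : x i * 2 ^ k / ((2 : ℕ) : ℝ) = x i * 2 ^ (k - 1) := by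
    rw [zpow_sub₀ two_ne_zero, zpow_one]; push_cast; ring
  simp only [parentIndex, dyadicIndex]
  rw [Int.fdiv_eq_ediv_of_nonneg _ two_pos.le, ← h, Int.floor_div_natCast]
  rfl

lemma dyadicIndex_eq_of_le {k k' : ℤ} (hk : k' ≤ k) {x y : Fin n → ℝ}
    (h : dyadicIndex k y = dyadicIndex k x) : dyadicIndex k' y = dyadicIndex k' x := by
  induction k', hk using Int.leInductionDown with
  | base => exact h
  | pred k' _ ih => rw [← parentIndex_dyadicIndex, ih, parentIndex_dyadicIndex]

lemma dyadicCube_subset_of_mem_of_le {p q : ℤ × (Fin n → ℤ)} {x : Fin n → ℝ}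
    (hxp : x ∈ dyadicCube n p.1 p.2) (hxq : x ∈ dyadicCube n q.1 q.2) (h : q.1 ≤ p.1) :
    dyadicCube n p.1 p.2 ⊆ dyadicCube n q.1 q.2 := fun y hy => by
  rw [← dyadicIndex_eq_of_mem hxq, ← dyadicIndex_eq_of_le h
    ((dyadicIndex_eq_of_mem hy).trans (dyadicIndex_eq_of_mem hxp).symm)]
  exact mem_dyadicCube_dyadicIndex _ y

lemma dyadicCube_subset_parentCube (p : ℤ × (Fin n → ℤ)) :
    dyadicCube n p.1 p.2 ⊆ parentCube n p := fun x hx => by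
  rw [parentCube_eq, ← dyadicIndex_eq_of_mem hx, parentIndex_dyadicIndex]
  exact mem_dyadicCube_dyadicIndex _ x

lemma parentIndex_dyadicIndex_add_one {R : ℤ × (Fin n → ℤ)} {x : Fin n → ℝ}
    (hx : x ∈ dyadicCube n R.1 R.2) : parentIndex (dyadicIndex (R.1 + 1) x) = R := by
  rw [parentIndex_dyadicIndex, add_sub_cancel_right, dyadicIndex_eq_of_mem hx]

lemma eq_of_mem_dyadicCube_of_fst_eq {p q : ℤ × (Fin n → ℤ)} {x : Fin n → ℝ}
    (hxp : x ∈ dyadicCube n p.1 p.2) (hxq : x ∈ dyadicCube n q.1 q.2) (h : p.1 = q.1) :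
    p = q := by
  rw [← dyadicIndex_eq_of_mem hxp, ← dyadicIndex_eq_of_mem hxq, h]

lemma disjoint_dyadicCube_of_fst_eq {p q : ℤ × (Fin n → ℤ)} (h : p.1 = q.1) (hpq : p ≠ q) :
    Disjoint (dyadicCube n p.1 p.2) (dyadicCube n q.1 q.2) :=
  disjoint_left.2 fun _ hxp hxq => hpq (eq_of_mem_dyadicCube_of_fst_eq hxp hxq h)

/-- A cube of scale `k` has points `a` and `a + 2^(-k')` for every `k' > k`, and these lie in
different cubes of scale `k'`. -/
lemma fst_le_of_dyadicCube_subset (hn : 0 < n) {p q : ℤ × (Fin n → ℤ)}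
    (h : dyadicCube n p.1 p.2 ⊆ dyadicCube n q.1 q.2) : q.1 ≤ p.1 := by
  by_contra! hlt
  set a : Fin n → ℝ := fun i => p.2 i * 2 ^ (-p.1)
  set w : Fin n → ℝ := fun i => a i + 2 ^ (-q.1)
  have hside : (2:ℝ) ^ (-q.1) < 2 ^ (-p.1) := zpow_lt_zpow_right₀ one_lt_two (neg_lt_neg hlt)
  have hpos : (0:ℝ) < 2 ^ (-q.1) := zpow_pos two_pos _
  have ha : a ∈ dyadicCube n p.1 p.2 := fun i => ⟨le_rfl, by simp only [a]; linarith⟩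
  have hw : w ∈ dyadicCube n p.1 p.2 := fun i =>
    ⟨by simp only [w, a]; linarith, by simp only [w, a]; linarith⟩
  have hidx := congrFun (congrArg Prod.snd
    ((dyadicIndex_eq_of_mem (h hw)).trans (dyadicIndex_eq_of_mem (h ha)).symm)) ⟨0, hn⟩
  have hshift : w ⟨0, hn⟩ * 2 ^ q.1 = a ⟨0, hn⟩ * 2 ^ q.1 + 1 := by
    simp only [w]
    rw [add_mul, ← zpow_add₀ two_ne_zero, neg_add_cancel, zpow_zero]
  simp only [dyadicIndex, hshift, Int.floor_add_one] at hidx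
  omega

lemma fst_lt_of_dyadicCube_subset (hn : 0 < n) {p q : ℤ × (Fin n → ℤ)}
    (h : dyadicCube n p.1 p.2 ⊆ dyadicCube n q.1 q.2) (hpq : p ≠ q) : q.1 < p.1 := by
  obtain ⟨x, hx⟩ := dyadicCube_nonempty p
  exact (fst_le_of_dyadicCube_subset hn h).lt_of_ne fun h' =>
    hpq (eq_of_mem_dyadicCube_of_fst_eq hx (h hx) h'.symm)

lemma pairwiseDisjoint_filter_parentIndex_eq (s : Finset (ℤ × (Fin n → ℤ)))
    (R : ℤ × (Fin n → ℤ)) :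
    (s.filter (parentIndex · = R) : Set (ℤ × (Fin n → ℤ))).PairwiseDisjoint
      fun p => dyadicCube n p.1 p.2 := by
  intro p hp q hq hpq
  have hfst : (parentIndex p).1 = (parentIndex q).1 := by
    rw [(Finset.mem_filter.1 hp).2, (Finset.mem_filter.1 hq).2]
  exact disjoint_dyadicCube_of_fst_eq (by simpa [parentIndex] using hfst) hpq

lemma biUnion_filter_parentIndex_eq {s : Finset (ℤ × (Fin n → ℤ))} {R : ℤ × (Fin n → ℤ)}
    (hs : ∀ q, parentIndex q = R → q ∈ s) :
    ⋃ p ∈ s.filter (parentIndex · = R), dyadicCube n p.1 p.2 = dyadicCube n R.1 R.2 := by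
  refine Subset.antisymm (iUnion₂_subset fun p hp => ?_) fun y hy => ?_
  · rw [← (Finset.mem_filter.1 hp).2]
    exact dyadicCube_subset_parentCube p
  · have hc := parentIndex_dyadicIndex_add_one hy
    exact mem_biUnion (Finset.mem_filter.2 ⟨hs _ hc, hc⟩) (mem_dyadicCube_dyadicIndex _ y)

lemma ne_of_parentIndex_eq (hn : 0 < n) {𝒞 : Finset (ℤ × (Fin n → ℤ))} {Qp : ℤ × (Fin n → ℤ)}
    (hmax : ∀ p ∈ 𝒞, dyadicCube n p.1 p.2 ⊆ dyadicCube n Qp.1 Qp.2)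
    {R q : ℤ × (Fin n → ℤ)} (hR : R ∈ 𝒞) (hq : parentIndex q = R) : q ≠ Qp := by
  rintro rfl
  have hscale : R.1 = q.1 - 1 := by rw [← hq]; rfl
  have := fst_le_of_dyadicCube_subset hn (hmax R hR)
  omega

lemma parentIndex_mem_sdiff (hn : 0 < n) {𝒞 ℳ : Finset (ℤ × (Fin n → ℤ))}
    {Qp : ℤ × (Fin n → ℤ)} (hQ : Qp ∈ 𝒞)
    (hmax : ∀ p ∈ 𝒞, dyadicCube n p.1 p.2 ⊆ dyadicCube n Qp.1 Qp.2)
    (hconv : ∀ p ∈ 𝒞, ∀ q ∈ 𝒞, ∀ r : ℤ × (Fin n → ℤ),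
      dyadicCube n p.1 p.2 ⊆ dyadicCube n r.1 r.2 →
      dyadicCube n r.1 r.2 ⊆ dyadicCube n q.1 q.2 → r ∈ 𝒞)
    (hM : ∀ p, p ∈ ℳ ↔ p ∈ 𝒞 ∧
      ∀ q ∈ 𝒞, dyadicCube n q.1 q.2 ⊆ dyadicCube n p.1 p.2 → q = p)
    {p : ℤ × (Fin n → ℤ)} (hp : p ∈ 𝒞.erase Qp) : parentIndex p ∈ 𝒞 \ ℳ := by
  obtain ⟨hpQ, hpC⟩ := Finset.mem_erase.1 hp
  obtain ⟨x, hx⟩ := dyadicCube_nonempty p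
  have hpar : dyadicCube n p.1 p.2 ⊆ dyadicCube n (parentIndex p).1 (parentIndex p).2 :=
    dyadicCube_subset_parentCube p
  have hlt := fst_lt_of_dyadicCube_subset hn (hmax p hpC) hpQ
  have hparQ : dyadicCube n (parentIndex p).1 (parentIndex p).2 ⊆ dyadicCube n Qp.1 Qp.2 :=
    dyadicCube_subset_of_mem_of_le (hpar hx) (hmax p hpC hx) (by simp only [parentIndex]; omega)
  refine Finset.mem_sdiff.2 ⟨hconv p hpC Qp hQ _ hpar hparQ, fun hmin => ?_⟩
  have := congrArg Prod.fst (((hM _).1 hmin).2 p hpC hpar)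
  simp only [parentIndex] at this
  omega

/-- Sibling closure puts all children of a non-minimal cube `R` in the family, once one is; and
one is, by convexity, namely the child of `R` containing a strictly smaller cube of the family. -/
lemma mem_erase_of_parentIndex_eq (hn : 0 < n) {𝒞 ℳ : Finset (ℤ × (Fin n → ℤ))}
    {Qp : ℤ × (Fin n → ℤ)}
    (hmax : ∀ p ∈ 𝒞, dyadicCube n p.1 p.2 ⊆ dyadicCube n Qp.1 Qp.2)
    (hconv : ∀ p ∈ 𝒞, ∀ q ∈ 𝒞, ∀ r : ℤ × (Fin n → ℤ),
      dyadicCube n p.1 p.2 ⊆ dyadicCube n r.1 r.2 →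
      dyadicCube n r.1 r.2 ⊆ dyadicCube n q.1 q.2 → r ∈ 𝒞)
    (hsib : ∀ p ∈ 𝒞, p ≠ Qp → ∀ q : ℤ × (Fin n → ℤ), q.1 = p.1 →
      parentCube n q = parentCube n p → q ∈ 𝒞)
    (hM : ∀ p, p ∈ ℳ ↔ p ∈ 𝒞 ∧
      ∀ q ∈ 𝒞, dyadicCube n q.1 q.2 ⊆ dyadicCube n p.1 p.2 → q = p)
    {R : ℤ × (Fin n → ℤ)} (hR : R ∈ 𝒞 \ ℳ) {q : ℤ × (Fin n → ℤ)} (hq : parentIndex q = R) :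
    q ∈ 𝒞.erase Qp := by
  obtain ⟨hRC, hRM⟩ := Finset.mem_sdiff.1 hR
  obtain ⟨r, hrC, hrR, hrne⟩ : ∃ r ∈ 𝒞, dyadicCube n r.1 r.2 ⊆ dyadicCube n R.1 R.2 ∧ r ≠ R := by
    by_contra! h
    exact hRM ((hM R).2 ⟨hRC, h⟩)
  have hlt := fst_lt_of_dyadicCube_subset hn hrR hrne
  obtain ⟨x, hx⟩ := dyadicCube_nonempty r
  set c := dyadicIndex (R.1 + 1) x
  have hxc : x ∈ dyadicCube n c.1 c.2 := mem_dyadicCube_dyadicIndex _ x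
  have hcR : dyadicCube n c.1 c.2 ⊆ dyadicCube n R.1 R.2 :=
    dyadicCube_subset_of_mem_of_le hxc (hrR hx) (by simp [c, dyadicIndex])
  have hrc : dyadicCube n r.1 r.2 ⊆ dyadicCube n c.1 c.2 :=
    dyadicCube_subset_of_mem_of_le hx hxc (by simp only [c, dyadicIndex]; omega)
  have hcpar : parentIndex c = R := parentIndex_dyadicIndex_add_one (hrR hx)
  have hfst : q.1 = c.1 := by
    have h1 : (parentIndex q).1 = (parentIndex c).1 := by rw [hq, hcpar]
    simpa [parentIndex] using h1
  have hqC := hsib c (hconv r hrC R hRC c hrc hcR) (ne_of_parentIndex_eq hn hmax hRC hcpar) q hfst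
    (by rw [parentCube_eq, parentCube_eq, hq, hcpar])
  exact Finset.mem_erase.2 ⟨ne_of_parentIndex_eq hn hmax hRC hq, hqC⟩

end Dyadic

/-- telescoping identity. For a finite convex, sibling-closed family
`𝒞` of dyadic cubes with unique maximal cube `Q` and minimal cubes `ℳ`,
`Σ_{J ∈ 𝒞∖{Q}} ⟨g, h_J⟩ h_J = Σ_{M ∈ ℳ} ⟨g⟩_M 𝟙_M − ⟨g⟩_Q 𝟙_Q` μ-a.e. -/
theorem stmt18 (n : ℕ) (hn : 0 < n) (μ : Measure (Fin n → ℝ))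
    (𝒞 : Finset (ℤ × (Fin n → ℤ))) (Qp : ℤ × (Fin n → ℤ)) (hQ : Qp ∈ 𝒞)
    (hmax : ∀ p ∈ 𝒞, dyadicCube n p.1 p.2 ⊆ dyadicCube n Qp.1 Qp.2)
    (hconv : ∀ p ∈ 𝒞, ∀ q ∈ 𝒞, ∀ r : ℤ × (Fin n → ℤ),
      dyadicCube n p.1 p.2 ⊆ dyadicCube n r.1 r.2 →
      dyadicCube n r.1 r.2 ⊆ dyadicCube n q.1 q.2 → r ∈ 𝒞)
    (hsib : ∀ p ∈ 𝒞, p ≠ Qp → ∀ q : ℤ × (Fin n → ℤ), q.1 = p.1 →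
      parentCube n q = parentCube n p → q ∈ 𝒞)
    (ℳ : Finset (ℤ × (Fin n → ℤ)))
    (hM : ∀ p, p ∈ ℳ ↔ p ∈ 𝒞 ∧
      ∀ q ∈ 𝒞, dyadicCube n q.1 q.2 ⊆ dyadicCube n p.1 p.2 → q = p)
    (hfin : μ (dyadicCube n Qp.1 Qp.2) ≠ ⊤)
    (g : (Fin n → ℝ) → ℝ) (hg : IntegrableOn g (dyadicCube n Qp.1 Qp.2) μ) :
    ∀ᵐ x ∂μ,
      (∑ p ∈ 𝒞.erase Qp,
        (∫ y, g y * haarFn μ (dyadicCube n p.1 p.2) (parentCube n p) y ∂μ) *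
          haarFn μ (dyadicCube n p.1 p.2) (parentCube n p) x)
      = (∑ p ∈ ℳ, avgOn μ g (dyadicCube n p.1 p.2) *
            Set.indicator (dyadicCube n p.1 p.2) (fun _ => (1:ℝ)) x)
        - avgOn μ g (dyadicCube n Qp.1 Qp.2) *
            Set.indicator (dyadicCube n Qp.1 Qp.2) (fun _ => (1:ℝ)) x :=
  ae_sum_integral_mul_haarFn_mul_haarFn_eq (cube := fun p => dyadicCube n p.1 p.2)
    (parent := parentIndex) hQ (fun p hp => ((hM p).1 hp).1)
    (fun _ => parentIndex_mem_sdiff hn hQ hmax hconv hM)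
    (fun R _ => pairwiseDisjoint_filter_parentIndex_eq _ R)
    (fun _ hR => biUnion_filter_parentIndex_eq fun _ =>
      mem_erase_of_parentIndex_eq hn hmax hconv hsib hM hR)
    (fun p _ => measurableSet_dyadicCube p.1 p.2) hmax hfin hg
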